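/- arXiv:1604.07948 — 3 statements merged into one kernel-verified Lean document; each statement's English description precedes it below -/
import Mathlib

section
/- Let g ∈ ℝ², β > 0, γ ∈ ℝ, and set G = g gᵀ + β I and D = G⁻¹ (√(det G))^{2γ−1}. Then D is symmetric positive definite; g is an eigenvector of D with eigenvalue λ_∥ = β^{γ−1/2} (‖g‖₂² + β)^{γ−3/2}; every vector orthogonal to g is an eigenvector with eigenvalue λ_⊥ = β^{γ−3/2} (‖g‖₂² + β)^{γ−1/2}; and the ratio satisfies λ_∥/λ_⊥ = β/(‖g‖₂² + β) ≤ 1, with equality if and only if g = 0 (in which case λ_∥ = λ_⊥ and D is a multiple of the identity). Hence diffusion with tensor D is slower across the estimated gradient direction than along it whenever ‖g‖₂ > 0 (edge preservation). -/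
open Matrix Real

/-!
`G = g gᵀ + β I` acts as `g ↦ (‖g‖² + β) g` and as `v ↦ β v` on `g^⊥`, so `G⁻¹` has the inverse
eigenvalues on the same eigenvectors, and `det G = β (‖g‖² + β)` by the matrix determinant lemma.
Multiplying by the positive scalar `(√det G)^{2γ-1} = β^{γ-1/2} (‖g‖² + β)^{γ-1/2}` keeps positive
definiteness and turns these into `λ∥` and `λ⊥`; everything else is arithmetic of real powers.
-/

section Metric

variable {n : Type*} [Fintype n]

lemma dotProduct_self_add_pos {g : n → ℝ} {β : ℝ} (hβ : 0 < β) : 0 < g ⬝ᵥ g + β :=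
  add_pos_of_nonneg_of_pos (dotProduct_self_star_nonneg g) hβ

variable [DecidableEq n]

def gradientMetric (g : n → ℝ) (β : ℝ) : Matrix n n ℝ := vecMulVec g g + β • 1

noncomputable def diffusionTensor (γ : ℝ) (G : Matrix n n ℝ) : Matrix n n ℝ :=
  √G.det ^ (2 * γ - 1) • G⁻¹

variable {g : n → ℝ} {β : ℝ}

lemma gradientMetric_mulVec (x : n → ℝ) :
    gradientMetric g β *ᵥ x = (g ⬝ᵥ x) • g + β • x := by
  ext i
  simp only [gradientMetric, add_mulVec, vecMulVec_mulVec, smul_mulVec, one_mulVec]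
  simp [op_smul_eq_smul, mul_comm]

lemma gradientMetric_mulVec_self : gradientMetric g β *ᵥ g = (g ⬝ᵥ g + β) • g := by
  rw [gradientMetric_mulVec, add_smul]

lemma gradientMetric_mulVec_of_dotProduct_eq_zero {v : n → ℝ} (hv : g ⬝ᵥ v = 0) :
    gradientMetric g β *ᵥ v = β • v := by
  rw [gradientMetric_mulVec, hv, zero_smul, zero_add]

lemma posDef_gradientMetric (hβ : 0 < β) : (gradientMetric g β).PosDef :=
  PosDef.posSemidef_add (by simpa using posSemidef_vecMulVec_self_star g) (PosDef.one.smul hβ)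

lemma det_gradientMetric [Nonempty n] (hβ : β ≠ 0) :
    (gradientMetric g β).det = β ^ (Fintype.card n - 1) * (g ⬝ᵥ g + β) := by
  have hfactor : gradientMetric g β = β • (1 + vecMulVec (β⁻¹ • g) g) := by
    rw [gradientMetric, smul_add, smul_vecMulVec, smul_smul, mul_inv_cancel₀ hβ, one_smul,
      add_comm]
  obtain ⟨k, hk⟩ := Nat.exists_eq_add_one.2 (Fintype.card_pos (α := n))
  rw [hfactor, det_smul, vecMulVec_eq Unit, det_one_add_replicateCol_mul_replicateRow,
    dotProduct_smul, smul_eq_mul, hk, Nat.add_sub_cancel, pow_succ]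
  field_simp
  ring

lemma Matrix.PosDef.diffusionTensor {G : Matrix n n ℝ} (hG : G.PosDef) (γ : ℝ) :
    (diffusionTensor γ G).PosDef :=
  hG.inv.smul (rpow_pos_of_pos (sqrt_pos.2 hG.det_pos) _)

lemma diffusionTensor_mulVec_of_mulVec_eq_smul {G : Matrix n n ℝ} (hG : IsUnit G.det) (γ : ℝ)
    {μ : ℝ} (hμ : μ ≠ 0) {x : n → ℝ} (hx : G *ᵥ x = μ • x) :
    diffusionTensor γ G *ᵥ x = (√G.det ^ (2 * γ - 1) * μ⁻¹) • x := by
  have hinv : G⁻¹ *ᵥ x = μ⁻¹ • x :=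
    calc G⁻¹ *ᵥ x = μ⁻¹ • G⁻¹ *ᵥ (μ • x) := by rw [mulVec_smul, inv_smul_smul₀ hμ]
      _ = μ⁻¹ • x := by rw [← hx, mulVec_mulVec, nonsing_inv_mul G hG, one_mulVec]
  rw [diffusionTensor, smul_mulVec, hinv, smul_smul]

end Metric

section Plane

variable {g : Fin 2 → ℝ} {β : ℝ}

lemma sqrt_det_gradientMetric_rpow (hβ : 0 < β) (γ : ℝ) :
    √(gradientMetric g β).det ^ (2 * γ - 1) = β ^ (γ - 1/2) * (g ⬝ᵥ g + β) ^ (γ - 1/2) := by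
  have hsum := dotProduct_self_add_pos (g := g) hβ
  rw [det_gradientMetric hβ.ne', Fintype.card_fin, pow_one, sqrt_eq_rpow,
    ← rpow_mul (by positivity), show 1 / 2 * (2 * γ - 1) = γ - 1/2 by ring,
    mul_rpow hβ.le hsum.le]

lemma diffusionTensor_gradientMetric_mulVec_self (hβ : 0 < β) (γ : ℝ) :
    diffusionTensor γ (gradientMetric g β) *ᵥ g =
      (β ^ (γ - 1/2) * (g ⬝ᵥ g + β) ^ (γ - 3/2)) • g := by
  have hsum := dotProduct_self_add_pos (g := g) hβ
  rw [diffusionTensor_mulVec_of_mulVec_eq_smul (posDef_gradientMetric hβ).det_pos.ne'.isUnit γ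
    hsum.ne' gradientMetric_mulVec_self, sqrt_det_gradientMetric_rpow hβ,
    show γ - 3/2 = γ - 1/2 - 1 by ring, rpow_sub_one hsum.ne']
  congr 1
  ring

lemma diffusionTensor_gradientMetric_mulVec_of_dotProduct_eq_zero (hβ : 0 < β) (γ : ℝ)
    {v : Fin 2 → ℝ} (hv : g ⬝ᵥ v = 0) :
    diffusionTensor γ (gradientMetric g β) *ᵥ v =
      (β ^ (γ - 3/2) * (g ⬝ᵥ g + β) ^ (γ - 1/2)) • v := by
  rw [diffusionTensor_mulVec_of_mulVec_eq_smul (posDef_gradientMetric hβ).det_pos.ne'.isUnit γ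
    hβ.ne' (gradientMetric_mulVec_of_dotProduct_eq_zero hv), sqrt_det_gradientMetric_rpow hβ,
    show γ - 3/2 = γ - 1/2 - 1 by ring, rpow_sub_one hβ.ne']
  congr 1
  ring

end Plane

lemma rpow_mul_rpow_div_rpow_mul_rpow_of_sub_eq_one {a b y z : ℝ} (ha : 0 < a) (hb : 0 < b)
    (hyz : y - z = 1) : a ^ y * b ^ z / (a ^ z * b ^ y) = a / b := by
  rw [show y = z + 1 by linarith, rpow_add_one ha.ne', rpow_add_one hb.ne']
  field_simp

/-- Properties of the diffusion tensor `D = G⁻¹ (√(det G))^{2γ-1}` for the optimal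
metric `G = g gᵀ + β I`: `D` is symmetric positive definite; `g` is an eigenvector
with eigenvalue `λ∥ = β^{γ-1/2} (‖g‖₂² + β)^{γ-3/2}`; vectors orthogonal to `g` are
eigenvectors with eigenvalue `λ⊥ = β^{γ-3/2} (‖g‖₂² + β)^{γ-1/2}`; the ratio is
`λ∥/λ⊥ = β/(‖g‖₂² + β) ≤ 1`, with equality iff `g = 0`, in which case `D` is a
multiple of the identity. -/
theorem stmt_11 (g : Fin 2 → ℝ) (β γ : ℝ) (hβ : 0 < β)
    (G D : Matrix (Fin 2) (Fin 2) ℝ)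
    (hG : G = Matrix.vecMulVec g g + β • 1)
    (hD : D = (Real.sqrt G.det) ^ (2 * γ - 1) • G⁻¹) :
    D.PosDef ∧
    D *ᵥ g = (β ^ (γ - 1/2) * (g ⬝ᵥ g + β) ^ (γ - 3/2)) • g ∧
    (∀ v : Fin 2 → ℝ, g ⬝ᵥ v = 0 →
      D *ᵥ v = (β ^ (γ - 3/2) * (g ⬝ᵥ g + β) ^ (γ - 1/2)) • v) ∧
    (β ^ (γ - 1/2) * (g ⬝ᵥ g + β) ^ (γ - 3/2))
        / (β ^ (γ - 3/2) * (g ⬝ᵥ g + β) ^ (γ - 1/2))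
      = β / (g ⬝ᵥ g + β) ∧
    β / (g ⬝ᵥ g + β) ≤ 1 ∧
    (β / (g ⬝ᵥ g + β) = 1 ↔ g = 0) ∧
    (g = 0 → D = (β ^ (2 * γ - 2)) • 1) := by
  obtain rfl : G = gradientMetric g β := hG
  obtain rfl : D = diffusionTensor γ (gradientMetric g β) := hD
  have hsum := dotProduct_self_add_pos (g := g) hβ
  have hperp := fun (v : Fin 2 → ℝ) ↦
    diffusionTensor_gradientMetric_mulVec_of_dotProduct_eq_zero (g := g) (v := v) hβ γ
  refine ⟨(posDef_gradientMetric hβ).diffusionTensor γ,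
    diffusionTensor_gradientMetric_mulVec_self hβ γ, hperp,
    rpow_mul_rpow_div_rpow_mul_rpow_of_sub_eq_one hβ hsum (by ring),
    (div_le_one hsum).2 (le_add_of_nonneg_left (dotProduct_self_star_nonneg g)), ?_, ?_⟩
  · rw [div_eq_one_iff_eq hsum.ne', ← dotProduct_self_eq_zero]
    constructor <;> intro h <;> linarith
  · rintro rfl
    refine ext_iff_mulVec.2 fun v ↦ ?_
    rw [hperp v (zero_dotProduct v), smul_mulVec, one_mulVec, zero_dotProduct, zero_add,
      ← rpow_add hβ]
    congr 2
    ring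
end

section
/- Let β > 0 and γ < 1, define λ₁(s) = (1 + s²/β²)^{γ−3/2}, J₁(s) = s·λ₁(s), and the contrast parameter T = β/√(2(1−γ)). Then: (i) J₁′(s) > 0 for all 0 ≤ s < T (forward diffusion across edges); (ii) J₁′(T) = 0 (no diffusion across edges); and (iii) J₁′(s) < 0 for all s > T (backward diffusion across edges). In particular T is the unique nonnegative zero of J₁′. -/
/-!
Differentiating gives `J₁'(s) = (1 + s²/β²)^{γ-5/2} (1 - s²/T²)`, since `(2γ - 2)/β² = -1/T²`.
The first factor is positive, so the sign of `J₁'` on `[0, ∞)` is that of `T - s`.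
-/

open Real

lemma hasDerivAt_mul_rpow_one_add_sq_div (β p s : ℝ) :
    HasDerivAt (fun s : ℝ => s * (1 + s ^ 2 / β ^ 2) ^ p)
      ((1 + s ^ 2 / β ^ 2) ^ (p - 1) * (1 + (2 * p + 1) * s ^ 2 / β ^ 2)) s := by
  have hpos : 0 < 1 + s ^ 2 / β ^ 2 := by positivity
  have hinner : HasDerivAt (fun s : ℝ => 1 + s ^ 2 / β ^ 2) (2 * s / β ^ 2) s := by
    simpa using ((hasDerivAt_pow 2 s).div_const (β ^ 2)).const_add 1
  refine ((hasDerivAt_id s).mul (hinner.rpow_const (p := p) (Or.inl hpos.ne'))).congr_deriv ?_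
  have hsplit : (1 + s ^ 2 / β ^ 2) ^ p = (1 + s ^ 2 / β ^ 2) ^ (p - 1) * (1 + s ^ 2 / β ^ 2) := by
    rw [← rpow_add_one hpos.ne', sub_add_cancel]
  rw [hsplit, id]
  ring

/-- Forward–backward diffusion for `γ < 1`: with flux `J₁(s) = s (1+s²/β²)^{γ-3/2}`
and contrast parameter `T = β/√(2(1-γ))`, the across-edge diffusivity `J₁'` is
positive on `[0, T)` (forward diffusion), vanishes at `T`, is negative on `(T, ∞)`
(backward diffusion), and `T` is the unique nonnegative zero of `J₁'`. -/
theorem stmt_14 (β γ : ℝ) (hβ : 0 < β) (hγ : γ < 1)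
    (J : ℝ → ℝ) (hJ : J = fun s => s * (1 + s ^ 2 / β ^ 2) ^ (γ - 3/2))
    (T : ℝ) (hT : T = β / Real.sqrt (2 * (1 - γ))) :
    (∀ s : ℝ, 0 ≤ s → s < T → 0 < deriv J s) ∧
    deriv J T = 0 ∧
    (∀ s : ℝ, T < s → deriv J s < 0) ∧
    (∀ s : ℝ, 0 ≤ s → deriv J s = 0 → s = T) := by
  have hγ' : 0 < 2 * (1 - γ) := by linarith
  have hT0 : 0 < T := hT ▸ div_pos hβ (sqrt_pos.mpr hγ')
  have hT2 : T ^ 2 = β ^ 2 / (2 * (1 - γ)) := by rw [hT, div_pow, sq_sqrt hγ'.le]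
  have hderiv : ∀ s, deriv J s = (1 + s ^ 2 / β ^ 2) ^ (γ - 3/2 - 1) * (1 - s ^ 2 / T ^ 2) := by
    intro s
    rw [hJ, (hasDerivAt_mul_rpow_one_add_sq_div β (γ - 3/2) s).deriv, hT2]
    field_simp
    ring
  have hfactor : ∀ s, 0 < (1 + s ^ 2 / β ^ 2) ^ (γ - 3/2 - 1) := fun s => by positivity
  refine ⟨fun s hs hsT => ?_, ?_, fun s hTs => ?_, fun s hs hzero => ?_⟩
  · rw [hderiv]
    refine mul_pos (hfactor s) ?_
    rw [sub_pos, div_lt_one (by positivity)]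
    nlinarith
  · rw [hderiv, div_self (by positivity), sub_self, mul_zero]
  · rw [hderiv]
    refine mul_neg_of_pos_of_neg (hfactor s) ?_
    rw [sub_neg, one_lt_div (by positivity)]
    nlinarith
  · rw [hderiv, mul_eq_zero, sub_eq_zero] at hzero
    have hsq : s ^ 2 = T ^ 2 :=
      (div_eq_one_iff_eq (by positivity)).mp (hzero.resolve_left (hfactor s).ne').symm
    exact (pow_left_inj₀ hs hT0.le two_ne_zero).mp hsq
end

section
/- Let β > 0 and γ > 1, and define λ₁(s) = (1 + s²/β²)^{γ−3/2} and J₁(s) = s·λ₁(s). Then J₁′(s) > 0 for all s ≥ 0; that is, for γ > 1 there is always forward diffusion (smoothing) across edges and backward diffusion never occurs. -/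
/-! Writing `A = 1 + s²/β²` and `p = γ - 3/2`, the product rule gives
`J₁'(s) = A^p + 2p s²/β² · A^(p-1) = A^(p-1) · (1 + (2p+1) s²/β²)`,
and `2p + 1 = 2(γ - 1) > 0`. -/

open Real

section PeronaMalikFlux

variable (β p : ℝ)

lemma one_add_sq_div_sq_pos (s : ℝ) : 0 < 1 + s ^ 2 / β ^ 2 := by positivity

lemma hasDerivAt_mul_one_add_sq_div_sq_rpow (s : ℝ) :
    HasDerivAt (fun s => s * (1 + s ^ 2 / β ^ 2) ^ p)
      ((1 + s ^ 2 / β ^ 2) ^ (p - 1) * (1 + (2 * p + 1) * s ^ 2 / β ^ 2)) s := by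
  set A := 1 + s ^ 2 / β ^ 2 with hA
  have hA_pos : 0 < A := one_add_sq_div_sq_pos β s
  have h_inner : HasDerivAt (fun s => 1 + s ^ 2 / β ^ 2) (2 * s / β ^ 2) s := by
    simpa [mul_comm] using ((hasDerivAt_pow 2 s).div_const (β ^ 2)).const_add 1
  have h_outer : HasDerivAt (fun x => x ^ p) (p * A ^ (p - 1)) A :=
    hasDerivAt_rpow_const (Or.inl hA_pos.ne')
  refine ((hasDerivAt_id' s).mul (h_outer.comp s h_inner)).congr_deriv ?_
  rw [Function.comp_apply, rpow_sub_one hA_pos.ne', hA]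
  field_simp
  ring

lemma deriv_mul_one_add_sq_div_sq_rpow_pos (hp : 0 ≤ 2 * p + 1) (s : ℝ) :
    0 < deriv (fun s => s * (1 + s ^ 2 / β ^ 2) ^ p) s := by
  rw [(hasDerivAt_mul_one_add_sq_div_sq_rpow β p s).deriv]
  have : 0 ≤ (2 * p + 1) * s ^ 2 / β ^ 2 := by positivity
  exact mul_pos (rpow_pos_of_pos (one_add_sq_div_sq_pos β s) _) (by linarith)

end PeronaMalikFlux

theorem stmt_16_general (β γ : ℝ) (hγ : 1 < γ)
    (J : ℝ → ℝ) (hJ : J = fun s => s * (1 + s ^ 2 / β ^ 2) ^ (γ - 3/2)) :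
    ∀ s : ℝ, 0 ≤ s → 0 < deriv J s := by
  subst hJ
  exact fun s _ => deriv_mul_one_add_sq_div_sq_rpow_pos β _ (by linarith) s

/-- Pure forward diffusion for `γ > 1`: with flux `J₁(s) = s (1+s²/β²)^{γ-3/2}`, the
across-edge diffusivity `J₁'(s)` is positive for all `s ≥ 0`, so backward diffusion
never occurs. -/
theorem stmt_16 (β γ : ℝ) (hβ : 0 < β) (hγ : 1 < γ)
    (J : ℝ → ℝ) (hJ : J = fun s => s * (1 + s ^ 2 / β ^ 2) ^ (γ - 3/2)) :
    ∀ s : ℝ, 0 ≤ s → 0 < deriv J s :=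
  stmt_16_general β γ hγ J hJ
end
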